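/- For every integer n ≥ 2, the total number of levels over all compositions of n with parts in ℕ⁺ (all positive integers allowed as parts) satisfies 9 · ∑_{σ∈C_n^{ℕ⁺}} levels(σ) = 2^{n−2}·(3n+1) + 2·(−1)^{n}, as an identity of integers. -/

import Mathlib

/-!
Splitting off the first part `k` of a composition of `n` leaves a composition of `n - k`, and
the levels of the composition are those of the remainder plus one if the remainder starts with
`k`. Hence `T n = ∑_{j<n} T j + B n`, where `T n` is the total number of levels and `B n` the
number of compositions of `n` whose first two parts are equal. Lowering both of these parts by one
(or deleting them when they are `1, 1`) gives `B (n + 2) = B n + #C n`, so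
`3 B (n + 1) = 2 ^ n - (-1) ^ n`, and `T (n + 2) = 2 T (n + 1) + B (n + 2) - B (n + 1)` solves to
the closed form.
-/

/-- Number of levels of a list (adjacent equal pairs). -/
def levelsL (l : List ℕ) : ℕ := (l.zip l.tail).countP (fun p => decide (p.1 = p.2))

open Finset

def compositionLists (n : ℕ) : Finset (List ℕ) :=
  univ.image (Composition.blocks : Composition n → List ℕ)

lemma mem_compositionLists {n : ℕ} {l : List ℕ} :
    l ∈ compositionLists n ↔ (∀ x ∈ l, 0 < x) ∧ l.sum = n := by
  simp only [compositionLists, mem_image, mem_univ, true_and]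
  constructor
  · rintro ⟨c, rfl⟩
    exact ⟨fun _ => c.blocks_pos, c.blocks_sum⟩
  · rintro ⟨hpos, hsum⟩
    exact ⟨⟨l, hpos _, hsum⟩, rfl⟩

lemma sum_composition_blocks {M : Type*} [AddCommMonoid M] (n : ℕ) (f : List ℕ → M) :
    ∑ c : Composition n, f c.blocks = ∑ l ∈ compositionLists n, f l :=
  (sum_image fun _ _ _ _ h => Composition.ext h).symm

lemma card_compositionLists (n : ℕ) : #(compositionLists n) = 2 ^ (n - 1) := by
  rw [compositionLists, card_image_of_injective _ fun _ _ h => Composition.ext h, card_univ,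
    composition_card]

lemma nil_mem_compositionLists {n : ℕ} : [] ∈ compositionLists n ↔ n = 0 := by
  simp [mem_compositionLists, eq_comm]

lemma cons_mem_compositionLists {n a : ℕ} {t : List ℕ} :
    a :: t ∈ compositionLists n ↔ 0 < a ∧ a ≤ n ∧ t ∈ compositionLists (n - a) := by
  simp only [mem_compositionLists, List.mem_cons, forall_eq_or_imp, List.sum_cons]
  constructor
  · rintro ⟨⟨ha, ht⟩, hs⟩
    exact ⟨ha, by omega, ht, by omega⟩
  · rintro ⟨ha, han, ht, hs⟩
    exact ⟨⟨ha, ht⟩, by omega⟩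

lemma compositionLists_zero : compositionLists 0 = {[]} := by
  ext (_ | ⟨a, t⟩)
  · simp [nil_mem_compositionLists]
  · simp only [cons_mem_compositionLists, mem_singleton, reduceCtorEq, iff_false]
    omega

lemma sum_compositionLists_succ {M : Type*} [AddCommMonoid M] (n : ℕ) (g : List ℕ → M) :
    ∑ l ∈ compositionLists (n + 1), g l =
      ∑ k ∈ range (n + 1), ∑ t ∈ compositionLists (n - k), g ((k + 1) :: t) := by
  rw [sum_sigma']
  refine sum_nbij' (fun l => ⟨l.headI - 1, l.tail⟩) (fun p => (p.1 + 1) :: p.2) ?_ ?_ ?_ ?_ ?_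
  · rintro (_ | ⟨a, t⟩) hl
    · simp [nil_mem_compositionLists] at hl
    · obtain ⟨ha, han, ht⟩ := cons_mem_compositionLists.1 hl
      simp only [mem_sigma, mem_range, List.headI_cons, List.tail_cons]
      exact ⟨by omega, by rwa [show n - (a - 1) = n + 1 - a by omega]⟩
  · rintro ⟨k, t⟩ hp
    simp_all [cons_mem_compositionLists]
  · rintro (_ | ⟨a, t⟩) hl
    · simp [nil_mem_compositionLists] at hl
    · simp [Nat.sub_add_cancel (cons_mem_compositionLists.1 hl).1]
  · rintro ⟨k, t⟩ -
    simp
  · rintro (_ | ⟨a, t⟩) hl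
    · simp [nil_mem_compositionLists] at hl
    · simp [Nat.sub_add_cancel (cons_mem_compositionLists.1 hl).1]

lemma levelsL_cons (k : ℕ) (l : List ℕ) :
    levelsL (k :: l) = levelsL l + if l.head? = some k then 1 else 0 := by
  cases l with
  | nil => simp [levelsL]
  | cons a t =>
    simp [levelsL, List.countP_cons, eq_comm]

lemma card_filter_head_eq (m k : ℕ) :
    #{t ∈ compositionLists m | t.head? = some (k + 1)} =
      if k < m then #(compositionLists (m - (k + 1))) else 0 := by
  cases m with
  | zero => simp [compositionLists_zero]
  | succ m =>
    rw [card_filter, sum_compositionLists_succ]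
    simp [sum_ite_eq']

def totalLevels (n : ℕ) : ℕ := ∑ l ∈ compositionLists n, levelsL l

-- compositions of `N` whose first two parts are both `k + 1`, summed over `k`
def firstLevelCount (N : ℕ) : ℕ :=
  ∑ k ∈ range N, #{t ∈ compositionLists (N - 1 - k) | t.head? = some (k + 1)}

lemma totalLevels_succ (n : ℕ) :
    totalLevels (n + 1) = ∑ j ∈ range (n + 1), totalLevels j + firstLevelCount (n + 1) := by
  rw [totalLevels, sum_compositionLists_succ]
  simp only [levelsL_cons, sum_add_distrib, ← card_filter]
  rw [← sum_range_reflect totalLevels (n + 1)]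
  simp only [firstLevelCount, totalLevels, add_tsub_cancel_right]

lemma firstLevelCount_add_two (N : ℕ) :
    firstLevelCount (N + 2) = firstLevelCount N + #(compositionLists N) := by
  simp only [firstLevelCount, card_filter_head_eq]
  rw [sum_range_succ', sum_range_succ, if_neg (by omega), if_pos (by omega), add_zero,
    show N + 2 - 1 - 0 - (0 + 1) = N by omega]
  congr 1
  refine sum_congr rfl fun x _ => ?_
  rw [show N + 2 - 1 - (x + 1) - (x + 1 + 1) = N - 1 - x - (x + 1) by omega]
  exact if_congr (by omega) rfl rfl

lemma firstLevelCount_eq (N : ℕ) :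
    3 * (firstLevelCount (N + 1) : ℤ) = 2 ^ N - (-1) ^ N := by
  induction N using Nat.twoStepInduction with
  | zero => simp [firstLevelCount, card_filter_head_eq]
  | one =>
    rw [firstLevelCount_add_two]
    simp [firstLevelCount, compositionLists_zero]
  | more N ih _ =>
    rw [firstLevelCount_add_two, card_compositionLists, Nat.add_sub_cancel]
    push_cast
    linear_combination ih

lemma totalLevels_add_two (n : ℕ) :
    (totalLevels (n + 2) : ℤ) =
      2 * totalLevels (n + 1) + firstLevelCount (n + 2) - firstLevelCount (n + 1) := by
  have h₂ : totalLevels (n + 2) = ∑ j ∈ range (n + 2), totalLevels j + firstLevelCount (n + 2) :=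
    totalLevels_succ (n + 1)
  have h₁ := totalLevels_succ n
  rw [sum_range_succ] at h₂
  omega

lemma totalLevels_eq (m : ℕ) :
    9 * (totalLevels (m + 2) : ℤ) = 2 ^ m * (3 * (m + 2) + 1) + 2 * (-1) ^ m := by
  induction m with
  | zero =>
    have h₀ : totalLevels 0 = 0 := by simp [totalLevels, compositionLists_zero, levelsL]
    have h₁ := totalLevels_succ 0
    have b₁ := firstLevelCount_eq 0
    have b₂ := firstLevelCount_eq 1
    rw [totalLevels_add_two]
    simp_all
  | succ m ih =>
    rw [totalLevels_add_two]
    push_cast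
    linear_combination 2 * ih + 3 * firstLevelCount_eq (m + 2) - 3 * firstLevelCount_eq (m + 1)

theorem stmt8 (n : ℕ) (hn : 2 ≤ n) :
    (9 : ℤ) * ∑ c : Composition n, (levelsL c.blocks : ℤ)
      = 2 ^ (n - 2) * (3 * (n : ℤ) + 1) + 2 * (-1) ^ n := by
  obtain ⟨m, rfl⟩ := Nat.exists_eq_add_of_le' hn
  rw [sum_composition_blocks (m + 2) fun l => (levelsL l : ℤ), ← Nat.cast_sum, ← totalLevels,
    totalLevels_eq, Nat.add_sub_cancel]
  push_cast
  ring
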